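/- Let d ≥ 1, p ∈ [1,∞], 1 < α ≤ 2, x₀ ∈ ℝ^d, and let ϑ : ℝ^d → ℝ be continuously differentiable with |∇ϑ(x) − ∇ϑ(y)| ≤ H |x−y|^{α−1} for all x, y. Define, for 0 < δ ≤ 1 and smooth compactly supported φ : ℝ^d → ℝ, the functions (Δ_{ϑ,δ}φ)(x) = ϑ(δx + x₀) Δφ(x) + δ ∇ϑ(δx + x₀)·∇φ(x) and (Δ'φ)(x) = (∇ϑ(x₀)·x) Δφ(x) + ∇ϑ(x₀)·∇φ(x). Then there is a constant C = C(H, α, d) such that ‖ Δ_{ϑ,δ}φ − ϑ(x₀) Δφ − δ Δ'φ ‖_{L^p(ℝ^d)} ≤ C δ^α ‖φ‖_{W̄^{2,p}_α}. -/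

import Mathlib

open MeasureTheory Real
open scoped ENNReal NNReal
noncomputable section

abbrev Esp (d : ℕ) := EuclideanSpace ℝ (Fin d)

/-- Partial derivative in direction `i`. -/
def pderiv (d : ℕ) (i : Fin d) (f : Esp d → ℝ) : Esp d → ℝ :=
  fun x => fderiv ℝ f x (EuclideanSpace.single i 1)

/-- Laplacian `Δ f = ∑ i ∂²f/∂x_i²`. -/
def laplacian (d : ℕ) (f : Esp d → ℝ) : Esp d → ℝ :=
  fun x => ∑ i : Fin d, pderiv d i (pderiv d i f) x

/-- Heat kernel on ℝ^d: `q_t(x) = (4πt)^{-d/2} exp(-|x|²/(4t))`. -/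
def heatKernel (d : ℕ) (t : ℝ) (x : Esp d) : ℝ :=
  (4 * π * t) ^ (-(d : ℝ) / 2) * Real.exp (-‖x‖ ^ 2 / (4 * t))

/-- Multi-index partial derivative `∂_γ f`. -/
def mderiv (d : ℕ) (γ : Fin d → ℕ) (f : Esp d → ℝ) : Esp d → ℝ :=
  (List.finRange d).foldr (fun i g => (pderiv d i)^[γ i] g) f

/-- Weighted Sobolev norm
`‖f‖_{W̄^{k,p}_α} = ∑_{|γ| ≤ k} (‖∂_γ f‖_{L^p} + ‖|x|^α ∂_γ f‖_{L^p})`. -/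
def wSobolevNorm (d k : ℕ) (p : ℝ≥0∞) (α : ℝ) (f : Esp d → ℝ) : ℝ≥0∞ :=
  ∑ γ : (Fin d → Fin (k + 1)),
    if (∑ i, (γ i : ℕ)) ≤ k then
      eLpNorm (mderiv d (fun i => (γ i : ℕ)) f) p volume
        + eLpNorm (fun x => ‖x‖ ^ α * mderiv d (fun i => (γ i : ℕ)) f x) p volume
    else 0

/-- The localized divergence-form operator
`(Δ_{ϑ,δ}φ)(x) = ϑ(δx+x₀) Δφ(x) + δ ∇ϑ(δx+x₀)·∇φ(x)`. -/
def locDiffOp (d : ℕ) (ϑ : Esp d → ℝ) (x₀ : Esp d) (δ : ℝ) (φ : Esp d → ℝ) : Esp d → ℝ :=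
  fun x => ϑ (δ • x + x₀) * laplacian d φ x
    + δ * (inner ℝ (gradient ϑ (δ • x + x₀)) (gradient φ x) : ℝ)

/-- The linearization `(Δ'φ)(x) = (∇ϑ(x₀)·x) Δφ(x) + ∇ϑ(x₀)·∇φ(x)`. -/
def linDiffOp (d : ℕ) (ϑ : Esp d → ℝ) (x₀ : Esp d) (φ : Esp d → ℝ) : Esp d → ℝ :=
  fun x => (inner ℝ (gradient ϑ x₀) x : ℝ) * laplacian d φ x
    + (inner ℝ (gradient ϑ x₀) (gradient φ x) : ℝ)

/-!
The error term equals
`(ϑ(x₀ + δx) - ϑ(x₀) - ⟪∇ϑ(x₀), δx⟫) Δφ(x) + δ ⟪∇ϑ(x₀ + δx) - ∇ϑ(x₀), ∇φ(x)⟫`.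
Hölder continuity of `∇ϑ` bounds the first-order Taylor remainder by `H δ^α |x|^α` (mean value
inequality) and the gradient increment by `H δ^(α-1) |x|^(α-1) ≤ H δ^(α-1) (1 + |x|^α)`. Hence the
error is pointwise at most `H δ^α (|x|^α |Δφ| + (1 + |x|^α) |∇φ|)`, and each term of this majorant
is dominated in `L^p` by the weighted Sobolev norm of `φ`.
-/

theorem Real.rpow_sub_one_mul_self {x α : ℝ} (hx : 0 ≤ x) (hα : α ≠ 0) :
    x ^ (α - 1) * x = x ^ α := by
  rw [← Real.rpow_add_one' hx (by simpa using hα), sub_add_cancel]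

section HolderGradient

variable {E : Type*} [NormedAddCommGroup E] [InnerProductSpace ℝ E] [CompleteSpace E]

theorem abs_sub_sub_inner_gradient_le {f : E → ℝ} (hf : Differentiable ℝ f) {α c : ℝ}
    (hα : 1 < α) (hc : 0 ≤ c)
    (hH : ∀ x y, ‖gradient f x - gradient f y‖ ≤ c * ‖x - y‖ ^ (α - 1)) (x v : E) :
    |f (x + v) - f x - inner ℝ (gradient f x) v| ≤ c * ‖v‖ ^ α := by
  set L := InnerProductSpace.toDual ℝ E (gradient f x)
  have hderiv : ∀ y, HasFDerivAt (fun y => f y - L y)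
      (InnerProductSpace.toDual ℝ E (gradient f y - gradient f x)) y := fun y => by
    rw [map_sub]
    exact (hf y).hasGradientAt.hasFDerivAt.sub L.hasFDerivAt
  have hbound : ∀ y ∈ Metric.closedBall x ‖v‖,
      ‖InnerProductSpace.toDual ℝ E (gradient f y - gradient f x)‖ ≤ c * ‖v‖ ^ (α - 1) := by
    intro y hy
    rw [LinearIsometryEquiv.norm_map]
    refine (hH y x).trans (mul_le_mul_of_nonneg_left ?_ hc)
    exact Real.rpow_le_rpow (norm_nonneg _) (mem_closedBall_iff_norm.mp hy) (by linarith)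
  have hmvt := (convex_closedBall x ‖v‖).norm_image_sub_le_of_norm_hasFDerivWithin_le
    (fun y _ => (hderiv y).hasFDerivWithinAt) hbound
    (Metric.mem_closedBall_self (norm_nonneg v)) (y := x + v) (by simp)
  rw [add_sub_cancel_left, mul_assoc, Real.rpow_sub_one_mul_self (norm_nonneg v) (by linarith),
    Real.norm_eq_abs, map_add] at hmvt
  convert hmvt using 2
  simp only [L, InnerProductSpace.toDual_apply_apply]
  ring

end HolderGradient

section Laplacian

variable {d : ℕ}

theorem EuclideanSpace.norm_le_sum_abs (x : Esp d) : ‖x‖ ≤ ∑ i, |x i| := by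
  have hsq : ‖x‖ ^ 2 ≤ (∑ i, |x i|) ^ 2 := by
    rw [EuclideanSpace.norm_sq_eq]
    exact Finset.sum_sq_le_sq_sum_of_nonneg fun i _ => norm_nonneg (x i)
  exact (pow_le_pow_iff_left₀ (norm_nonneg x) (by positivity) two_ne_zero).mp hsq

theorem gradient_apply_eq_pderiv (φ : Esp d → ℝ) (x : Esp d) (i : Fin d) :
    gradient φ x i = pderiv d i φ x := by
  have h := InnerProductSpace.toDual_symm_apply (𝕜 := ℝ) (x := EuclideanSpace.single i (1 : ℝ))
    (y := fderiv ℝ φ x)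
  rwa [EuclideanSpace.inner_single_right, one_mul, RCLike.conj_to_real] at h

theorem norm_gradient_le_sum_abs_pderiv (φ : Esp d → ℝ) (x : Esp d) :
    ‖gradient φ x‖ ≤ ∑ i, |pderiv d i φ x| := by
  simpa only [gradient_apply_eq_pderiv] using EuclideanSpace.norm_le_sum_abs (gradient φ x)

theorem abs_laplacian_le_sum_abs (φ : Esp d → ℝ) (x : Esp d) :
    |laplacian d φ x| ≤ ∑ i, |pderiv d i (pderiv d i φ) x| :=
  Finset.abs_sum_le_sum_abs _ _

theorem measurable_pderiv (i : Fin d) (f : Esp d → ℝ) : Measurable (pderiv d i f) :=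
  measurable_fderiv_apply_const ℝ f _

theorem mderiv_pi_single (i : Fin d) (n : ℕ) (f : Esp d → ℝ) :
    mderiv d (Pi.single i n) f = (pderiv d i)^[n] f := by
  have key : ∀ l : List (Fin d), l.Nodup →
      l.foldr (fun j g => (pderiv d j)^[(Pi.single i n : Fin d → ℕ) j] g) f
        = if i ∈ l then (pderiv d i)^[n] f else f := by
    intro l hl
    induction l with
    | nil => simp
    | cons a t ih =>
      rw [List.nodup_cons] at hl
      rw [List.foldr_cons, ih hl.2]
      by_cases hai : a = i
      · subst hai
        simp [hl.1]
      · simp [hai, Ne.symm hai]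
  rw [mderiv, key _ (List.nodup_finRange d)]
  simp

theorem eLpNorm_iterate_pderiv_add_le_wSobolevNorm (k : ℕ) (p : ℝ≥0∞) (α : ℝ)
    (φ : Esp d → ℝ) (i : Fin d) {n : ℕ} (hn : n ≤ k) :
    eLpNorm ((pderiv d i)^[n] φ) p volume
      + eLpNorm (fun x => ‖x‖ ^ α * (pderiv d i)^[n] φ x) p volume
      ≤ wSobolevNorm d k p α φ := by
  set γ : Fin d → Fin (k + 1) := Pi.single i ⟨n, by omega⟩
  have hγ : (fun j => (γ j : ℕ)) = Pi.single i n := by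
    funext j
    by_cases h : j = i
    · subst h; simp [γ]
    · simp [γ, h]
  have hle := Finset.single_le_sum (f := fun γ : Fin d → Fin (k + 1) =>
    if (∑ i, (γ i : ℕ)) ≤ k then
      eLpNorm (mderiv d (fun i => (γ i : ℕ)) φ) p volume
        + eLpNorm (fun x => ‖x‖ ^ α * mderiv d (fun i => (γ i : ℕ)) φ x) p volume
    else 0) (fun _ _ => zero_le) (Finset.mem_univ γ)
  simpa [wSobolevNorm, hγ, mderiv_pi_single, hn] using hle

theorem locDiffOp_sub_sub_linDiffOp (ϑ : Esp d → ℝ) (x₀ : Esp d) (δ : ℝ) (φ : Esp d → ℝ)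
    (x : Esp d) :
    locDiffOp d ϑ x₀ δ φ x - ϑ x₀ * laplacian d φ x - δ * linDiffOp d ϑ x₀ φ x
      = (ϑ (x₀ + δ • x) - ϑ x₀ - inner ℝ (gradient ϑ x₀) (δ • x)) * laplacian d φ x
        + δ * inner ℝ (gradient ϑ (x₀ + δ • x) - gradient ϑ x₀) (gradient φ x) := by
  simp only [locDiffOp, linDiffOp, inner_sub_left, real_inner_smul_right, add_comm x₀]
  ring

theorem abs_locDiffOp_sub_sub_linDiffOp_le {ϑ : Esp d → ℝ} (hϑ : Differentiable ℝ ϑ)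
    {α c : ℝ} (hα : 1 < α) (hc : 0 ≤ c)
    (hH : ∀ x y, ‖gradient ϑ x - gradient ϑ y‖ ≤ c * ‖x - y‖ ^ (α - 1))
    (x₀ : Esp d) {δ : ℝ} (hδ : 0 < δ) (φ : Esp d → ℝ) (x : Esp d) :
    |locDiffOp d ϑ x₀ δ φ x - ϑ x₀ * laplacian d φ x - δ * linDiffOp d ϑ x₀ φ x|
      ≤ c * δ ^ α * (‖x‖ ^ α * |laplacian d φ x| + (1 + ‖x‖ ^ α) * ‖gradient φ x‖) := by
  have hscale : ∀ β : ℝ, ‖δ • x‖ ^ β = δ ^ β * ‖x‖ ^ β := fun β => by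
    rw [norm_smul, Real.norm_of_nonneg hδ.le, Real.mul_rpow hδ.le (norm_nonneg x)]
  have htaylor := abs_sub_sub_inner_gradient_le hϑ hα hc hH x₀ (δ • x)
  have hholder := hH (x₀ + δ • x) x₀
  rw [hscale] at htaylor
  rw [add_sub_cancel_left, hscale] at hholder
  have hpow : ‖x‖ ^ (α - 1) ≤ 1 + ‖x‖ ^ α := by
    rcases le_or_gt ‖x‖ 1 with h | h
    · linarith [Real.rpow_le_one (norm_nonneg x) h (by linarith : 0 ≤ α - 1),
        Real.rpow_nonneg (norm_nonneg x) α]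
    · linarith [Real.rpow_le_rpow_of_exponent_le h.le (by linarith : α - 1 ≤ α)]
  rw [locDiffOp_sub_sub_linDiffOp]
  calc _ ≤ |ϑ (x₀ + δ • x) - ϑ x₀ - inner ℝ (gradient ϑ x₀) (δ • x)| * |laplacian d φ x|
        + δ * (‖gradient ϑ (x₀ + δ • x) - gradient ϑ x₀‖ * ‖gradient φ x‖) := by
        refine (abs_add_le _ _).trans ?_
        rw [abs_mul, abs_mul, abs_of_pos hδ]
        gcongr
        exact abs_real_inner_le_norm _ _
    _ ≤ c * (δ ^ α * ‖x‖ ^ α) * |laplacian d φ x|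
        + δ * (c * (δ ^ (α - 1) * ‖x‖ ^ (α - 1)) * ‖gradient φ x‖) := by gcongr
    _ = c * δ ^ α * (‖x‖ ^ α * |laplacian d φ x| + ‖x‖ ^ (α - 1) * ‖gradient φ x‖) := by
        rw [← Real.rpow_sub_one_mul_self hδ.le (by linarith : α ≠ 0)]
        ring
    _ ≤ _ := by gcongr

theorem eLpNorm_weighted_laplacian_add_gradient_le (p : ℝ≥0∞) (hp : 1 ≤ p) (α : ℝ)
    (φ : Esp d → ℝ) :
    eLpNorm (fun x => ‖x‖ ^ α * |laplacian d φ x| + (1 + ‖x‖ ^ α) * ‖gradient φ x‖) p volume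
      ≤ 2 * d * wSobolevNorm d 2 p α φ := by
  set u : Fin d → Esp d → ℝ := fun i x => ‖x‖ ^ α * pderiv d i (pderiv d i φ) x
  set v : Fin d → Esp d → ℝ := fun i x => pderiv d i φ x
  set w : Fin d → Esp d → ℝ := fun i x => ‖x‖ ^ α * pderiv d i φ x
  have hu : ∀ i, Measurable (u i) := fun i =>
    (measurable_norm.pow_const α).mul (measurable_pderiv i _)
  have hv : ∀ i, Measurable (v i) := fun i => measurable_pderiv i φ
  have hw : ∀ i, Measurable (w i) := fun i => (measurable_norm.pow_const α).mul (hv i)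
  have hpointwise : ∀ x, ‖x‖ ^ α * |laplacian d φ x| + (1 + ‖x‖ ^ α) * ‖gradient φ x‖
      ≤ ∑ i, (|u i x| + |v i x| + |w i x|) := fun x => by
    have hρ := Real.rpow_nonneg (norm_nonneg x) α
    simp only [u, v, w, abs_mul, abs_of_nonneg hρ, Finset.sum_add_distrib, ← Finset.mul_sum]
    nlinarith [mul_le_mul_of_nonneg_left (abs_laplacian_le_sum_abs φ x) hρ,
      norm_gradient_le_sum_abs_pderiv φ x,
      mul_le_mul_of_nonneg_left (norm_gradient_le_sum_abs_pderiv φ x) hρ]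
  have hsummand : ∀ i, eLpNorm (u i) p volume + eLpNorm (v i) p volume
      + eLpNorm (w i) p volume ≤ 2 * wSobolevNorm d 2 p α φ := fun i => by
    have h2 := eLpNorm_iterate_pderiv_add_le_wSobolevNorm 2 p α φ i le_rfl
    have h1 := eLpNorm_iterate_pderiv_add_le_wSobolevNorm 2 p α φ i one_le_two
    simp only [Function.iterate_one, Function.iterate_succ, Function.comp] at h1 h2
    calc _ ≤ eLpNorm (u i) p volume + (eLpNorm (v i) p volume + eLpNorm (w i) p volume) := by
          rw [add_assoc]
      _ ≤ wSobolevNorm d 2 p α φ + wSobolevNorm d 2 p α φ :=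
          add_le_add ((le_add_self).trans h2) h1
      _ = _ := (two_mul _).symm
  calc _ ≤ eLpNorm (∑ i, fun x => |u i x| + |v i x| + |w i x|) p volume := by
        refine eLpNorm_mono_real fun x => ?_
        rw [Finset.sum_apply, Real.norm_of_nonneg (by positivity)]
        exact hpointwise x
    _ ≤ ∑ i, eLpNorm (fun x => |u i x| + |v i x| + |w i x|) p volume :=
        eLpNorm_sum_le (fun i _ =>
          (((hu i).abs.add (hv i).abs).add (hw i).abs).aestronglyMeasurable) hp
    _ ≤ ∑ i, (eLpNorm (u i) p volume + eLpNorm (v i) p volume + eLpNorm (w i) p volume) := by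
        gcongr with i
        have habs : ∀ f : Esp d → ℝ, eLpNorm (fun x => |f x|) p volume = eLpNorm f p volume :=
          fun f => eLpNorm_norm f
        rw [← habs (u i), ← habs (v i), ← habs (w i)]
        refine (eLpNorm_add_le (((hu i).abs.add (hv i).abs).aestronglyMeasurable)
          (hw i).abs.aestronglyMeasurable hp).trans (add_le_add ?_ le_rfl)
        exact eLpNorm_add_le (hu i).abs.aestronglyMeasurable (hv i).abs.aestronglyMeasurable hp
    _ ≤ ∑ _i : Fin d, 2 * wSobolevNorm d 2 p α φ := Finset.sum_le_sum fun i _ => hsummand i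
    _ = _ := by rw [Finset.sum_const, Finset.card_univ, Fintype.card_fin, nsmul_eq_mul]; ring

end Laplacian

theorem stmt7_general (d : ℕ) (p : ℝ≥0∞) (hp : 1 ≤ p)
    (α : ℝ) (hα1 : 1 < α) (x₀ : Esp d)
    (ϑ : Esp d → ℝ) (hϑ : ContDiff ℝ 1 ϑ)
    (H : ℝ) (hH : ∀ x y, ‖gradient ϑ x - gradient ϑ y‖ ≤ H * ‖x - y‖ ^ (α - 1)) :
    ∃ C : ℝ, 0 < C ∧ ∀ δ : ℝ, 0 < δ → δ ≤ 1 →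
      ∀ φ : Esp d → ℝ, ContDiff ℝ (⊤ : ℕ∞) φ → HasCompactSupport φ →
        eLpNorm (fun x => locDiffOp d ϑ x₀ δ φ x - ϑ x₀ * laplacian d φ x
            - δ * linDiffOp d ϑ x₀ φ x) p volume ≤
          ENNReal.ofReal (C * δ ^ α) * wSobolevNorm d 2 p α φ := by
  set c := max H 0
  have hc : 0 ≤ c := le_max_right H 0
  have hH' : ∀ x y, ‖gradient ϑ x - gradient ϑ y‖ ≤ c * ‖x - y‖ ^ (α - 1) := fun x y =>
    (hH x y).trans (by gcongr; exact le_max_left H 0)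
  refine ⟨2 * d * c + 1, by positivity, fun δ hδ _ φ _ _ => ?_⟩
  have hpointwise := abs_locDiffOp_sub_sub_linDiffOp_le (hϑ.differentiable one_ne_zero)
    hα1 hc hH' x₀ hδ φ
  calc _ ≤ ENNReal.ofReal (c * δ ^ α) * eLpNorm (fun x =>
          ‖x‖ ^ α * |laplacian d φ x| + (1 + ‖x‖ ^ α) * ‖gradient φ x‖) p volume := by
        refine eLpNorm_le_mul_eLpNorm_of_ae_le_mul (Filter.Eventually.of_forall fun x => ?_) p
        rw [Real.norm_eq_abs, Real.norm_of_nonneg (by positivity)]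
        exact hpointwise x
    _ ≤ ENNReal.ofReal (c * δ ^ α) * (2 * d * wSobolevNorm d 2 p α φ) := by
        gcongr
        exact eLpNorm_weighted_laplacian_add_gradient_le p hp α φ
    _ = ENNReal.ofReal (2 * d * c * δ ^ α) * wSobolevNorm d 2 p α φ := by
        rw [show 2 * d * c * δ ^ α = ((2 * d : ℕ) : ℝ) * (c * δ ^ α) by push_cast; ring,
          ENNReal.ofReal_mul (Nat.cast_nonneg _), ENNReal.ofReal_natCast]
        push_cast
        ring
    _ ≤ ENNReal.ofReal ((2 * d * c + 1) * δ ^ α) * wSobolevNorm d 2 p α φ := by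
        gcongr
        linarith

/-- Second-order expansion of the localized diffusion operator:
`‖Δ_{ϑ,δ}φ − ϑ(x₀)Δφ − δΔ'φ‖_{L^p} ≤ C δ^α ‖φ‖_{W̄^{2,p}_α}` for `1 < α ≤ 2` and
`∇ϑ` Hölder of exponent `α−1`. -/
theorem stmt7 (d : ℕ) (hd : 1 ≤ d) (p : ℝ≥0∞) (hp : 1 ≤ p)
    (α : ℝ) (hα1 : 1 < α) (hα2 : α ≤ 2) (x₀ : Esp d)
    (ϑ : Esp d → ℝ) (hϑ : ContDiff ℝ 1 ϑ)
    (H : ℝ) (hH : ∀ x y, ‖gradient ϑ x - gradient ϑ y‖ ≤ H * ‖x - y‖ ^ (α - 1)) :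
    ∃ C : ℝ, 0 < C ∧ ∀ δ : ℝ, 0 < δ → δ ≤ 1 →
      ∀ φ : Esp d → ℝ, ContDiff ℝ (⊤ : ℕ∞) φ → HasCompactSupport φ →
        eLpNorm (fun x => locDiffOp d ϑ x₀ δ φ x - ϑ x₀ * laplacian d φ x
            - δ * linDiffOp d ϑ x₀ φ x) p volume ≤
          ENNReal.ofReal (C * δ ^ α) * wSobolevNorm d 2 p α φ :=
  stmt7_general d p hp α hα1 x₀ ϑ hϑ H hH
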